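/- (Theorem C) Let G be a countable post-injunctive group and let A be a finite alphabet. Let M ⊆ G be finite and S = A^(A^M). Let s ∈ S^G be asymptotically constant such that σ_s is stably post-surjective. Then σ_s is stably invertible. -/

import Mathlib

open Function Set Pointwise

section Defs

variable {G A S : Type*} [Group G]

/-- The NUCA `σ_s : A^G → A^G` determined by the configuration of local
defining maps `s ∈ S^G`, `S = A^(A^M)`:
`σ_s(x)(g) = s(g)((g⁻¹x)|_M)` where `(g⁻¹x)(h) = x(gh)`. -/
def nuca {M : Finset G} (s : G → ((M → A) → A)) : (G → A) → (G → A) :=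
  fun x g => s g fun m => x (g * (m : G))

/-- The closure, in the prodiscrete topology on `S^G`, of the shift orbit
`{gs : g ∈ G}`, where `(gs)(h) = s(g⁻¹h)`. -/
def orbitClosure (s : G → S) : Set (G → S) :=
  @closure (G → S) (@Pi.topologicalSpace G (fun _ => S) fun _ => ⊥)
    {p | ∃ g : G, p = fun h => s (g⁻¹ * h)}

/-- `τ` is a NUCA with finite memory. -/
def IsNUCAFin (τ : (G → A) → (G → A)) : Prop :=
  ∃ (M : Finset G) (s : G → ((M → A) → A)), τ = nuca s

/-- `τ` is invertible: it is bijective and its inverse is a NUCA with finite memory. -/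
def IsInvertibleNUCA (τ : (G → A) → (G → A)) : Prop :=
  Function.Bijective τ ∧ ∃ ρ : (G → A) → (G → A), IsNUCAFin ρ ∧
    Function.LeftInverse ρ τ ∧ Function.RightInverse ρ τ

/-- `σ_s` is stably injective: `σ_p` is injective for every `p ∈ Σ(s)`. -/
def StablyInjective {M : Finset G} (s : G → ((M → A) → A)) : Prop :=
  ∀ p ∈ orbitClosure s, Function.Injective (nuca p)

/-- `σ_s` is stably invertible. -/
def StablyInvertible {M : Finset G} (s : G → ((M → A) → A)) : Prop :=
  ∃ (N : Finset G) (t : G → ((N → A) → A)),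
    ∀ p ∈ orbitClosure s, ∃ q ∈ orbitClosure t,
      nuca p ∘ nuca q = id ∧ nuca q ∘ nuca p = id

/-- Two configurations are asymptotic if they agree outside a finite set. -/
def Asymptotic (x y : G → S) : Prop :=
  ∃ Ω : Finset G, ∀ g ∉ Ω, x g = y g

/-- `s` is asymptotically constant. -/
def AsymptoticallyConstant (s : G → S) : Prop :=
  ∃ c : S, Asymptotic s fun _ => c

/-- `τ` is pre-injective. -/
def PreInjective (τ : (G → A) → (G → A)) : Prop :=
  ∀ x y : G → A, Asymptotic x y → τ x = τ y → x = y

/-- `τ` is post-surjective. -/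
def PostSurjective (τ : (G → A) → (G → A)) : Prop :=
  ∀ x y : G → A, Asymptotic y (τ x) → ∃ z : G → A, Asymptotic z x ∧ τ z = y

/-- `σ_s` is stably post-surjective: `σ_p` is post-surjective for all `p ∈ Σ(s)`. -/
def StablyPostSurjective {M : Finset G} (s : G → ((M → A) → A)) : Prop :=
  ∀ p ∈ orbitClosure s, PostSurjective (nuca p)

/-- `τ` is a cellular automaton: a NUCA with finite memory and a constant
configuration of local defining maps. -/
def IsCellularAutomaton (τ : (G → A) → (G → A)) : Prop :=
  ∃ (M : Finset G) (μ : (M → A) → A), τ = nuca fun _ : G => μ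

/-- `G` is surjunctive: over every finite alphabet, injective CA are surjective. -/
def Surjunctive (G : Type*) [Group G] : Prop :=
  ∀ (B : Type) [Fintype B] (τ : (G → B) → (G → B)),
    IsCellularAutomaton τ → Function.Injective τ → Function.Surjective τ

/-- `G` is post-injunctive: over every finite alphabet, post-surjective CA are
pre-injective. -/
def PostInjunctive (G : Type*) [Group G] : Prop :=
  ∀ (B : Type) [Fintype B] (τ : (G → B) → (G → B)),
    IsCellularAutomaton τ → PostSurjective τ → PreInjective τ

/-- `s` has uniformly bounded singularity: for every finite symmetric `E ∋ 1`
there is a finite `F ⊇ E` such that `s` is constant on `FE ∖ F`. -/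
def UniformlyBoundedSingularity (s : G → S) : Prop :=
  ∀ E : Finset G, (1 : G) ∈ E → (∀ g ∈ E, g⁻¹ ∈ E) →
    ∃ F : Finset G, E ⊆ F ∧ ∃ c : S,
      ∀ g ∈ ((F : Set G) * (E : Set G)) \ (F : Set G), s g = c

end Defs

/-!
For infinite `G`, the constant rule `c` of `s` lies in `Σ(s)`, so the cellular automaton `σ_c` is
post-surjective, hence pre-injective because `G` is post-injunctive. By compactness a
post-surjective CA lifts every one-cell change of an image to a change of the preimage inside a
fixed finite set; combined with pre-injectivity this makes `σ_c` injective, and compactness also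
makes it surjective, with inverse a CA `σ_d` (Curtis–Hedlund). Now `σ_d ∘ σ_s` is post-surjective
and is the identity off a finite set, so it permutes each of the finite sets of configurations
agreeing off that set. Hence `σ_s` is bijective and its inverse agrees with `σ_d` off a finite
set, which makes it a NUCA `σ_t` with `t` asymptotically constant. Since `Σ(s)` consists of the
translates of `s` and the constant `c`, the translates of `t` and the constant rule that `t` takes
off a finite set provide the inverses. For finite `G`, `σ_s` is surjective, hence bijective, and
`Σ(s)` is the orbit of `s`.
-/

open Filter Topology

section Topology

variable {ι X : Type*} [TopologicalSpace X] [DiscreteTopology X]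

lemma hasBasis_nhds_pi_of_discrete (x : ι → X) :
    (𝓝 x).HasBasis (fun _ : Finset ι => True) fun F => {y | ∀ i ∈ F, y i = x i} := by
  classical
  rw [nhds_pi]
  refine (hasBasis_pi fun i => (nhds_discrete X).symm ▸ hasBasis_pure (x i)).to_hasBasis ?_ ?_
  · rintro ⟨I, u⟩ ⟨hI, -⟩
    exact ⟨hI.toFinset, trivial, fun y hy i hi => by simpa using hy i (by simpa using hi)⟩
  · intro F _
    exact ⟨(F, fun _ => ()), ⟨F.finite_toSet, fun _ _ => trivial⟩, fun y hy i hi => by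
      simpa using hy i hi⟩

lemma mem_closure_pi_of_discrete {D : Set (ι → X)} {x : ι → X} :
    x ∈ closure D ↔ ∀ F : Finset ι, ∃ y ∈ D, ∀ i ∈ F, y i = x i := by
  simp [mem_closure_iff_nhds_basis (hasBasis_nhds_pi_of_discrete x)]

lemma exists_finset_dependsOn_of_continuous [CompactSpace X] {β : Type*} [TopologicalSpace β]
    [DiscreteTopology β] {f : (ι → X) → β} (hf : Continuous f) :
    ∃ F : Finset ι, DependsOn f F := by
  classical
  have hloc : ∀ x, ∃ F : Finset ι, ∀ y, (∀ i ∈ F, y i = x i) → f y = f x := fun x =>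
    (hasBasis_nhds_pi_of_discrete x).mem_iff.1 ((isOpen_discrete {f x}).preimage hf |>.mem_nhds rfl)
      |>.imp fun _ h => h.2
  choose F hF using hloc
  obtain ⟨T, -, hT⟩ := isCompact_univ.elim_nhds_subcover _
    fun x _ => (hasBasis_nhds_pi_of_discrete x).mem_of_mem (i := F x) trivial
  refine ⟨T.biUnion F, fun y y' hyy' => ?_⟩
  obtain ⟨x, hx, hyx⟩ := Set.mem_iUnion₂.1 (hT (Set.mem_univ y))
  have hy'x : ∀ i ∈ F x, y' i = x i := fun i hi =>
    (hyy' i (Finset.mem_biUnion.2 ⟨x, hx, hi⟩)).symm.trans (hyx i hi)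
  rw [hF x y hyx, hF x y' hy'x]

lemma exists_frequently_eqOn [CompactSpace X] (u : Finset ι → (ι → X)) :
    ∃ w : ι → X, ∀ V F₀ : Finset ι, ∃ F, F₀ ⊆ F ∧ ∀ i ∈ V, u F i = w i := by
  obtain ⟨w, hw⟩ := exists_clusterPt_of_compactSpace (map u atTop)
  refine ⟨w, fun V F₀ => ?_⟩
  have := hw.frequently ((hasBasis_nhds_pi_of_discrete w).mem_of_mem (i := V) trivial)
  exact frequently_atTop.1 (frequently_map.1 this) F₀

lemma PostSurjective.surjective [Finite X] {τ : (ι → X) → (ι → X)} (hτ : Continuous τ)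
    (hps : PostSurjective τ) : Function.Surjective τ := by
  classical
  intro y
  have hy : y ∈ closure (Set.range τ) := by
    refine mem_closure_pi_of_discrete.2 fun F => ?_
    obtain ⟨z, -, hz⟩ :=
      hps y (F.piecewise y (τ y)) ⟨F, fun i hi => F.piecewise_eq_of_notMem _ _ hi⟩
    exact ⟨_, ⟨z, hz⟩, fun i hi => F.piecewise_eq_of_mem _ _ hi⟩
  rwa [(isCompact_range hτ).isClosed.closure_eq] at hy

lemma continuous_of_leftInverse_of_rightInverse {Y Z : Type*} [TopologicalSpace Y]
    [TopologicalSpace Z] [CompactSpace Y] [T2Space Z] {f : Y → Z} {g : Z → Y} (hf : Continuous f)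
    (hl : Function.LeftInverse g f) (hr : Function.RightInverse g f) : Continuous g :=
  Continuous.continuous_symm_of_equiv_compact_to_t2 (f := ⟨f, g, hl, hr⟩) hf

end Topology

section Configurations

variable {ι X : Type*}

/-- Every change of `τ x` inside `Φ` is the image of a change of `x` inside `K`. -/
def LiftsWithin (τ : (ι → X) → (ι → X)) (Φ K : Finset ι) : Prop :=
  ∀ x y : ι → X, (∀ h ∉ Φ, y h = τ x h) → ∃ z, (∀ h ∉ K, z h = x h) ∧ τ z = y

lemma LiftsWithin.union [DecidableEq ι] {τ : (ι → X) → (ι → X)} {Φ₁ Φ₂ K₁ K₂ : Finset ι}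
    (h₁ : LiftsWithin τ Φ₁ K₁) (h₂ : LiftsWithin τ Φ₂ K₂) :
    LiftsWithin τ (Φ₁ ∪ Φ₂) (K₁ ∪ K₂) := by
  intro x y hy
  obtain ⟨z₁, hz₁, hτz₁⟩ := h₁ x (Φ₁.piecewise y (τ x)) fun h hh => Φ₁.piecewise_eq_of_notMem _ _ hh
  obtain ⟨z, hz, hτz⟩ := h₂ z₁ y fun h hh => by
    rw [hτz₁]
    by_cases h₁h : h ∈ Φ₁
    · rw [Φ₁.piecewise_eq_of_mem _ _ h₁h]
    · rw [Φ₁.piecewise_eq_of_notMem _ _ h₁h, hy h (by simp [h₁h, hh])]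
  refine ⟨z, fun h hh => ?_, hτz⟩
  rw [Finset.mem_union, not_or] at hh
  rw [hz h hh.2, hz₁ h hh.1]

lemma PostSurjective.conj {τ : (ι → X) → (ι → X)} {Y : Type*} (e : X ≃ Y)
    (hτ : PostSurjective τ) : PostSurjective fun y => e ∘ τ (e.symm ∘ y) := by
  rintro x y ⟨Φ, hΦ⟩
  obtain ⟨z, ⟨Ψ, hΨ⟩, hz⟩ := hτ (e.symm ∘ x) (e.symm ∘ y)
    ⟨Φ, fun i hi => by simp [hΦ i hi]⟩
  refine ⟨e ∘ z, ⟨Ψ, fun i hi => by simp [hΨ i hi]⟩, ?_⟩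
  simp [← Function.comp_assoc, hz]

lemma PreInjective.of_conj {τ : (ι → X) → (ι → X)} {Y : Type*} (e : X ≃ Y)
    (h : PreInjective fun y => e ∘ τ (e.symm ∘ y)) : PreInjective τ := by
  rintro x x' ⟨Φ, hΦ⟩ hxx'
  refine e.injective.comp_left (h (e ∘ x) (e ∘ x') ⟨Φ, fun i hi => by simp [hΦ i hi]⟩ ?_)
  simp [← Function.comp_assoc, hxx']

lemma PostSurjective.comp_of_inverse {τ α θ : (ι → X) → (ι → X)} (hτ : PostSurjective τ)
    (hα : ∀ x y, Asymptotic x y → Asymptotic (α x) (α y)) (hθα : θ ∘ α = id)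
    (hαθ : α ∘ θ = id) : PostSurjective (θ ∘ τ) := by
  intro x y hy
  have hατx : α (θ (τ x)) = τ x := congrFun hαθ _
  obtain ⟨z, hzx, hz⟩ := hτ x (α y) (hατx ▸ hα _ _ hy)
  exact ⟨z, hzx, (congrArg θ hz).trans (congrFun hθα y)⟩

lemma bijective_of_postSurjective_of_eq_off [Finite X] {ρ : (ι → X) → (ι → X)} {Ω : Finset ι}
    (hρ : ∀ x, ∀ i ∉ Ω, ρ x i = x i) (hps : PostSurjective ρ) : Function.Bijective ρ := by
  -- `ρ` permutes the finite set of configurations that agree with a given `x` off `Ω`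
  let cell (x : ι → X) : Set (ι → X) := {w | ∀ i ∉ Ω, w i = x i}
  have hcell : ∀ x, Set.BijOn ρ (cell x) (cell x) := by
    intro x
    have hfin : (cell x).Finite := Set.Finite.of_finite_image (Set.toFinite _)
      (f := fun w (i : Ω) => w i) fun w hw w' hw' hww' => funext fun i => by
        by_cases hi : i ∈ Ω
        · exact congrFun hww' ⟨i, hi⟩
        · rw [hw i hi, hw' i hi]
    have hmaps : Set.MapsTo ρ (cell x) (cell x) := fun w hw i hi => (hρ w i hi).trans (hw i hi)
    refine (hfin.surjOn_iff_bijOn_of_mapsTo hmaps).1 fun y hy => ?_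
    obtain ⟨z, -, hz⟩ := hps x y ⟨Ω, fun i hi => (hy i hi).trans (hρ x i hi).symm⟩
    exact ⟨z, fun i hi => (hρ z i hi).symm.trans ((congrFun hz i).trans (hy i hi)), hz⟩
  refine ⟨fun x x' hxx' => (hcell x).injOn (fun _ _ => rfl) ?_ hxx', fun y => ?_⟩
  · exact fun i hi => (hρ x' i hi).symm.trans (hxx' ▸ hρ x i hi)
  · obtain ⟨x, -, hx⟩ := (hcell y).surjOn (fun _ _ => rfl : y ∈ cell y)
    exact ⟨x, hx⟩

end Configurations

section NUCA

variable {G A : Type*} [Group G] {M : Finset G}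

lemma nuca_apply_congr (p : G → ((M → A) → A)) {x y : G → A} {g : G}
    (h : ∀ m ∈ M, x (g * m) = y (g * m)) : nuca p x g = nuca p y g :=
  congrArg (p g) (funext fun m => h m m.2)

lemma nuca_shift (p : G → ((M → A) → A)) (g : G) (x : G → A) :
    nuca (fun h => p (g⁻¹ * h)) x = fun h => nuca p (fun k => x (g * k)) (g⁻¹ * h) := by
  funext h
  simp [nuca, mul_assoc]

lemma nuca_const_shift (c : (M → A) → A) (g : G) (x : G → A) :
    nuca (fun _ => c) (fun h => x (g * h)) = fun h => nuca (fun _ => c) x (g * h) := by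
  funext h
  simp [nuca, mul_assoc]

lemma nuca_shift_comp_shift {N : Finset G} {s : G → ((M → A) → A)} {t : G → ((N → A) → A)}
    (hst : nuca s ∘ nuca t = id) (g : G) :
    nuca (fun h => s (g⁻¹ * h)) ∘ nuca (fun h => t (g⁻¹ * h)) = id := by
  funext x h
  have hx := congrFun (congrFun hst fun k => x (g * k)) (g⁻¹ * h)
  simp only [Function.comp_apply, nuca_shift, id] at hx ⊢
  simpa using hx

lemma Asymptotic.nuca {x y : G → A} (hxy : Asymptotic x y) (p : G → ((M → A) → A)) :
    Asymptotic (nuca p x) (nuca p y) := by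
  classical
  obtain ⟨Ω, hΩ⟩ := hxy
  refine ⟨Ω * M⁻¹, fun g hg => nuca_apply_congr p fun m hm => hΩ _ fun hgm => hg ?_⟩
  exact Finset.mem_mul.2 ⟨g * m, hgm, m⁻¹, Finset.inv_mem_inv hm, by group⟩

lemma mem_orbitClosure_iff {S : Type*} {s p : G → S} :
    p ∈ orbitClosure s ↔ ∀ F : Finset G, ∃ g : G, ∀ h ∈ F, p h = s (g⁻¹ * h) := by
  let _ : TopologicalSpace S := ⊥
  have _ : DiscreteTopology S := ⟨rfl⟩
  simp only [orbitClosure, mem_closure_pi_of_discrete, Set.mem_ofPred_eq]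
  constructor
  · intro hcl F
    obtain ⟨_, ⟨g, rfl⟩, hg⟩ := hcl F
    exact ⟨g, fun h hh => (hg h hh).symm⟩
  · intro hcl F
    obtain ⟨g, hg⟩ := hcl F
    exact ⟨_, ⟨g, rfl⟩, fun h hh => (hg h hh).symm⟩

lemma shift_mem_orbitClosure {S : Type*} (s : G → S) (g : G) :
    (fun h => s (g⁻¹ * h)) ∈ orbitClosure s :=
  mem_orbitClosure_iff.2 fun _ => ⟨g, fun _ _ => rfl⟩

lemma const_mem_orbitClosure [Infinite G] {S : Type*} {s : G → S} {c : S}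
    (hs : Asymptotic s fun _ => c) : (fun _ => c) ∈ orbitClosure s := by
  classical
  obtain ⟨Ω, hΩ⟩ := hs
  refine mem_orbitClosure_iff.2 fun F => ?_
  obtain ⟨g, hg⟩ := Infinite.exists_notMem_finset (F * Ω⁻¹)
  refine ⟨g, fun h hh => (hΩ _ fun hmem => hg ?_).symm⟩
  exact Finset.mem_mul.2 ⟨h, hh, (g⁻¹ * h)⁻¹, Finset.inv_mem_inv hmem, by group⟩

lemma exists_eq_shift_of_mem_orbitClosure [Finite G] {S : Type*} {s p : G → S}
    (hp : p ∈ orbitClosure s) : ∃ g : G, p = fun h => s (g⁻¹ * h) := by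
  have := Fintype.ofFinite G
  obtain ⟨g, hg⟩ := mem_orbitClosure_iff.1 hp Finset.univ
  exact ⟨g, funext fun h => hg h (Finset.mem_univ h)⟩

lemma eq_shift_or_eq_const_of_mem_orbitClosure {S : Type*} {s p : G → S} {c : S}
    (hs : Asymptotic s fun _ => c) (hp : p ∈ orbitClosure s) :
    (∃ g : G, p = fun h => s (g⁻¹ * h)) ∨ p = fun _ => c := by
  classical
  obtain ⟨Ω, hΩ⟩ := hs
  by_contra! hne
  obtain ⟨hshift, h₀, hh₀⟩ := And.imp_right Function.ne_iff.1 hne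
  choose wit hwit using fun g => Function.ne_iff.1 (hshift g)
  -- a translate matching `p` at `h₀` must move a point of `Ω` to `h₀`
  let T := Ω.image fun ω => h₀ * ω⁻¹
  obtain ⟨g, hg⟩ := mem_orbitClosure_iff.1 hp (insert h₀ (T.image wit))
  have hgT : g ∈ T := by
    have hmem : g⁻¹ * h₀ ∈ Ω := by
      by_contra hnot
      exact hh₀ ((hg h₀ (Finset.mem_insert_self _ _)).trans (hΩ _ hnot))
    exact Finset.mem_image.2 ⟨_, hmem, by group⟩
  exact hwit g (hg _ (Finset.mem_insert_of_mem (Finset.mem_image_of_mem _ hgT)))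

open Classical in
/-- The local rule at `g` that `φ` would have with memory set `N`, reading a pattern on `gN` and
filling the rest of the configuration arbitrarily. -/
noncomputable def localRule [Nonempty A] (φ : (G → A) → (G → A)) (N : Finset G) :
    G → ((N → A) → A) :=
  fun g f => φ (fun h => if hh : g⁻¹ * h ∈ N then f ⟨g⁻¹ * h, hh⟩ else Classical.arbitrary A) g

lemma localRule_apply_eq [Nonempty A] {φ : (G → A) → (G → A)} {N : Finset G} {g : G}
    (hφ : ∀ y y' : G → A, (∀ n ∈ N, y (g * n) = y' (g * n)) → φ y g = φ y' g) (y : G → A) :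
    localRule φ N g (fun n => y (g * n)) = φ y g :=
  hφ _ _ fun n hn => by simp [hn]

section Continuity

variable [TopologicalSpace A] [DiscreteTopology A]

lemma continuous_nuca (p : G → ((M → A) → A)) : Continuous (nuca p) :=
  continuous_pi fun g => continuous_of_discreteTopology.comp
    (continuous_pi fun m => continuous_apply (g * (m : G)))

/-- The easy direction of the Curtis–Hedlund theorem. -/
lemma exists_nuca_const_eq [Finite A] [Nonempty A] {φ : (G → A) → (G → A)} (hφ : Continuous φ)
    (hshift : ∀ x g, φ (fun h => x (g * h)) = fun h => φ x (g * h)) :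
    ∃ (N : Finset G) (d : (N → A) → A), nuca (fun _ => d) = φ := by
  obtain ⟨N, hN⟩ := exists_finset_dependsOn_of_continuous ((continuous_apply 1).comp hφ)
  refine ⟨N, localRule φ N 1, funext fun y => funext fun g => ?_⟩
  have h1 : localRule φ N 1 (fun n => y (g * n)) = φ (fun h => y (g * h)) 1 := by
    simpa using localRule_apply_eq (φ := φ) (N := N) (g := 1)
      (fun z z' hzz' => hN fun n hn => by simpa using hzz' n hn) (fun h => y (g * h))
  simpa [nuca, hshift] using h1

end Continuity

lemma LiftsWithin.shift [DecidableEq G] {c : (M → A) → A} {K : Finset G}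
    (hK : LiftsWithin (nuca fun _ => c) {1} K) (g : G) :
    LiftsWithin (nuca fun _ => c) {g} (({g} : Finset G) * K) := by
  intro x y hy
  obtain ⟨z, hz, hτz⟩ := hK (fun h => x (g * h)) (fun h => y (g * h)) fun h hh => by
    rw [nuca_const_shift, hy]
    simpa using hh
  refine ⟨fun h => z (g⁻¹ * h), fun h hh => ?_, ?_⟩
  · have hk : g⁻¹ * h ∉ K := fun hk =>
      hh (Finset.mem_mul.2 ⟨g, Finset.mem_singleton_self g, _, hk, by group⟩)
    simp [hz _ hk]
  · rw [nuca_const_shift, hτz]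
    simp

lemma LiftsWithin.mul [DecidableEq G] {c : (M → A) → A} {K : Finset G}
    (hK : LiftsWithin (nuca fun _ => c) {1} K) (Φ : Finset G) :
    LiftsWithin (nuca fun _ => c) Φ (Φ * K) := by
  induction Φ using Finset.induction_on with
  | empty => exact fun x y hy => ⟨x, fun _ _ => rfl, funext fun h => (hy h (by simp)).symm⟩
  | insert g Φ _ ih =>
    rw [Finset.insert_eq, Finset.union_mul]
    exact (hK.shift g).union ih

lemma nuca_piecewise_eq [DecidableEq G] (p : G → ((M → A) → A)) {L D : Finset G}
    (hLD : L * M⁻¹ ⊆ D) {x z x' y : G → A} (hz : ∀ h ∉ L, z h = x h)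
    (hx' : ∀ h ∈ D * M, x' h = x h) (hyD : ∀ h ∈ D, y h = nuca p z h)
    (hy : ∀ h ∉ D, y h = nuca p x' h) :
    nuca p (L.piecewise z x') = y := by
  funext h
  by_cases hD : h ∈ D
  · rw [hyD h hD]
    refine nuca_apply_congr p fun m hm => ?_
    by_cases hL : h * m ∈ L
    · rw [L.piecewise_eq_of_mem _ _ hL]
    · rw [L.piecewise_eq_of_notMem _ _ hL, hx' _ (Finset.mul_mem_mul hD hm), hz _ hL]
  · rw [hy h hD]
    refine nuca_apply_congr p fun m hm => L.piecewise_eq_of_notMem _ _ fun hL => hD (hLD ?_)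
    exact Finset.mem_mul.2 ⟨h * m, hL, m⁻¹, Finset.inv_mem_inv hm, by group⟩

section Compactness

variable [TopologicalSpace A] [DiscreteTopology A] [Finite A]

lemma PostSurjective.exists_liftsWithin_one {p : G → ((M → A) → A)}
    (hps : PostSurjective (nuca p)) : ∃ K : Finset G, LiftsWithin (nuca p) {1} K := by
  classical
  by_contra! hbad
  simp only [LiftsWithin] at hbad
  push Not at hbad
  choose X Y hXY hbad using hbad
  obtain ⟨w, hw⟩ := exists_frequently_eqOn fun K h => (X K h, Y K h)
  set x : G → A := fun h => (w h).1
  set y : G → A := fun h => (w h).2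
  have hwxy : ∀ V F₀ : Finset G, ∃ F, F₀ ⊆ F ∧ ∀ h ∈ V, X F h = x h ∧ Y F h = y h :=
    fun V F₀ => (hw V F₀).imp fun _ ⟨hF₀, hF⟩ => ⟨hF₀, fun h hh => Prod.ext_iff.1 (hF h hh)⟩
  have hxy : ∀ h ∉ ({1} : Finset G), y h = nuca p x h := by
    intro h hh
    obtain ⟨F, -, hF⟩ := hwxy (insert h ({h} * M)) ∅
    rw [← (hF h (Finset.mem_insert_self _ _)).2, hXY F h hh]
    exact nuca_apply_congr p fun m hm => (hF _ (Finset.mem_insert_of_mem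
      (Finset.mul_mem_mul (Finset.mem_singleton_self h) hm))).1
  obtain ⟨z, ⟨L, hL⟩, hz⟩ := hps x y ⟨{1}, hxy⟩
  -- the correction `z` of the limit pair, glued into a bad pair close to it, corrects that pair
  set D := insert 1 (L * M⁻¹)
  obtain ⟨F, hLF, hF⟩ := hwxy (D * M ∪ D) L
  refine hbad F (L.piecewise z (X F))
    (fun h hh => L.piecewise_eq_of_notMem _ _ fun hl => hh (hLF hl))
    (nuca_piecewise_eq p (Finset.subset_insert _ _) hL
      (fun h hh => (hF h (Finset.mem_union_left _ hh)).1)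
      (fun h hh => by rw [(hF h (Finset.mem_union_right _ hh)).2, hz])
      (fun h hh => hXY F h fun h1 => hh ?_))
  rw [Finset.mem_singleton.1 h1]
  exact Finset.mem_insert_self _ _

lemma injective_of_preInjective_of_postSurjective {c : (M → A) → A}
    (hpi : PreInjective (nuca fun _ : G => c)) (hps : PostSurjective (nuca fun _ : G => c)) :
    Function.Injective (nuca fun _ : G => c) := by
  classical
  obtain ⟨K, hK⟩ := hps.exists_liftsWithin_one
  intro x x' hxx'
  by_contra hne
  obtain ⟨g₀, hg₀⟩ := Function.ne_iff.1 hne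
  -- replace `x` by `x'` on a ball `B` around `g₀`; the image only changes near the boundary `Φ`,
  -- and that change lifts to a change of `x` away from `g₀`
  set B := ({g₀} : Finset G) * insert 1 (K⁻¹ * M)
  set Φ := (B * M⁻¹) \ ({g₀} * K⁻¹)
  have hτ : ∀ h ∉ Φ, nuca (fun _ => c) x h = nuca (fun _ => c) (B.piecewise x' x) h := by
    intro h hh
    by_cases hB : h ∈ B * M⁻¹
    · obtain ⟨_, hg, k, hk, rfl⟩ := Finset.mem_mul.1 (by simpa [Φ, hB] using hh)
      rw [Finset.mem_singleton.1 hg, hxx']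
      refine nuca_apply_congr _ fun m hm => (B.piecewise_eq_of_mem _ _ ?_).symm
      rw [mul_assoc]
      exact Finset.mul_mem_mul (Finset.mem_singleton_self _)
        (Finset.mem_insert_of_mem (Finset.mul_mem_mul hk hm))
    · refine nuca_apply_congr _ fun m hm => (B.piecewise_eq_of_notMem _ _ fun hmB => hB ?_).symm
      exact Finset.mem_mul.2 ⟨h * m, hmB, m⁻¹, Finset.inv_mem_inv hm, by group⟩
  obtain ⟨z, hz, hτz⟩ := hK.mul Φ (B.piecewise x' x) _ hτ
  have hg₀Φ : g₀ ∉ Φ * K := by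
    intro hmem
    obtain ⟨φ, hφ, k, hk, hφk⟩ := Finset.mem_mul.1 hmem
    refine (Finset.mem_sdiff.1 hφ).2 (Finset.mem_mul.2 ⟨g₀, Finset.mem_singleton_self _, k⁻¹,
      Finset.inv_mem_inv hk, ?_⟩)
    rw [← hφk, mul_inv_cancel_right]
  have hzx : z = x := by
    refine hpi z x ⟨B ∪ Φ * K, fun h hh => ?_⟩ hτz
    rw [Finset.mem_union, not_or] at hh
    rw [hz h hh.2, B.piecewise_eq_of_notMem _ _ hh.1]
  have hg₀B : g₀ ∈ B := by
    simpa using Finset.mul_mem_mul (Finset.mem_singleton_self g₀) (Finset.mem_insert_self 1 _)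
  have hzg₀ := hz g₀ hg₀Φ
  rw [hzx, B.piecewise_eq_of_mem _ _ hg₀B] at hzg₀
  exact hg₀ hzg₀

end Compactness

lemma preInjective_of_postInjunctive (hG : PostInjunctive G) [Finite A] {c : (M → A) → A}
    (hps : PostSurjective (nuca fun _ : G => c)) : PreInjective (nuca fun _ : G => c) :=
  let e := Finite.equivFin A
  PreInjective.of_conj e (hG _ _ ⟨M, fun f => e (c (e.symm ∘ f)), rfl⟩ (hps.conj e))

lemma exists_inverse_eq_of_asymptotic [Finite A] {N : Finset G} {s : G → ((M → A) → A)}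
    {c : (M → A) → A} {d : (N → A) → A} (hs : Asymptotic s fun _ => c)
    (hps : PostSurjective (nuca s)) (hdc : nuca (fun _ : G => d) ∘ nuca (fun _ => c) = id)
    (hcd : nuca (fun _ : G => c) ∘ nuca (fun _ => d) = id) :
    ∃ χ : (G → A) → (G → A), χ ∘ nuca s = id ∧ nuca s ∘ χ = id ∧
      ∃ Ω : Finset G, ∀ y, ∀ g ∉ Ω, χ y g = nuca (fun _ => d) y g := by
  classical
  obtain ⟨Ω, hΩ⟩ := hs
  set θ := nuca fun _ : G => d
  set ρ := θ ∘ nuca s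
  have hρ : ∀ x, ∀ g ∉ Ω * N⁻¹, ρ x g = x g := by
    intro x g hg
    -- off `Ω N⁻¹`, `θ` only reads cells where the rule of `s` is `c`
    have hsc : θ (nuca s x) g = θ (nuca (fun _ => c) x) g := by
      refine nuca_apply_congr _ fun n hn => ?_
      have hgn : g * n ∉ Ω := fun hgn =>
        hg (Finset.mem_mul.2 ⟨g * n, hgn, n⁻¹, Finset.inv_mem_inv hn, by group⟩)
      simp only [nuca, hΩ _ hgn]
    exact hsc.trans (congrFun (congrFun hdc x) g)
  have hρbij := bijective_of_postSurjective_of_eq_off hρ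
    (hps.comp_of_inverse (fun _ _ hxy => hxy.nuca _) hdc hcd)
  set ρ' := Function.surjInv hρbij.2
  have hσ : ∀ x, nuca s x = nuca (fun _ => c) (ρ x) := fun x => (congrFun hcd _).symm
  refine ⟨ρ' ∘ θ, funext fun x => Function.leftInverse_surjInv hρbij x, funext fun y => ?_,
    Ω * N⁻¹, fun y g hg => ?_⟩
  · rw [Function.comp_apply, Function.comp_apply, hσ, Function.rightInverse_surjInv hρbij.2 (θ y)]
    exact congrFun hcd y
  · rw [← hρ ((ρ' ∘ θ) y) g hg]
    exact congrFun (Function.rightInverse_surjInv hρbij.2 (θ y)) g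

lemma exists_asymptotic_nuca_eq [TopologicalSpace A] [DiscreteTopology A] [Finite A] [Nonempty A]
    {χ : (G → A) → (G → A)} (hχ : Continuous χ) {N₀ Ω : Finset G} {d : (N₀ → A) → A}
    (hχd : ∀ y, ∀ g ∉ Ω, χ y g = nuca (fun _ => d) y g) :
    ∃ (N : Finset G) (t : G → ((N → A) → A)) (d' : (N → A) → A),
      Asymptotic t (fun _ => d') ∧ nuca t = χ ∧ nuca (fun _ : G => d') = nuca fun _ => d := by
  classical
  choose F hF using fun g => exists_finset_dependsOn_of_continuous ((continuous_apply g).comp hχ)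
  set N := N₀ ∪ Ω.biUnion fun g => (F g).image (g⁻¹ * ·)
  have hN₀ : N₀ ⊆ N := Finset.subset_union_left
  set d' : (N → A) → A := fun f => d fun n => f ⟨n, hN₀ n.2⟩
  refine ⟨N, fun g => if g ∈ Ω then localRule χ N g else d', d', ⟨Ω, fun g hg => if_neg hg⟩,
    funext fun y => funext fun g => ?_, rfl⟩
  by_cases hg : g ∈ Ω
  · simp only [nuca, if_pos hg]
    refine localRule_apply_eq (φ := χ) (N := N) (fun z z' hzz' => hF g fun h hh => ?_) y
    simpa using hzz' (g⁻¹ * h)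
      (Finset.mem_union_right _ (Finset.mem_biUnion.2 ⟨g, hg, Finset.mem_image_of_mem _ hh⟩))
  · simp only [nuca, if_neg hg]
    exact (hχd y g hg).symm

lemma exists_nuca_const_inverse [TopologicalSpace A] [DiscreteTopology A] [Finite A] [Nonempty A]
    {c : (M → A) → A} (hc : Function.Bijective (nuca fun _ : G => c)) :
    ∃ (N : Finset G) (d : (N → A) → A),
      nuca (fun _ : G => d) ∘ nuca (fun _ => c) = id ∧
        nuca (fun _ : G => c) ∘ nuca (fun _ => d) = id := by
  set θ := Function.surjInv hc.2
  have hl : Function.LeftInverse θ (nuca fun _ : G => c) := Function.leftInverse_surjInv hc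
  have hr : Function.RightInverse θ (nuca fun _ : G => c) := Function.rightInverse_surjInv hc.2
  have hshift : ∀ x g, θ (fun h => x (g * h)) = fun h => θ x (g * h) := fun x g =>
    hc.1 (by rw [hr, nuca_const_shift, hr x])
  obtain ⟨N, d, hd⟩ := exists_nuca_const_eq (continuous_of_leftInverse_of_rightInverse
    (continuous_nuca _) hl hr) hshift
  exact ⟨N, d, by rw [hd]; exact funext hl, by rw [hd]; exact funext hr⟩

lemma stablyInvertible_of_asymptotic [Infinite G] {N : Finset G} {s : G → ((M → A) → A)}
    {t : G → ((N → A) → A)} {c : (M → A) → A} {d : (N → A) → A} (hs : Asymptotic s fun _ => c)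
    (ht : Asymptotic t fun _ => d) (hst : nuca s ∘ nuca t = id) (hts : nuca t ∘ nuca s = id)
    (hcd : nuca (fun _ : G => c) ∘ nuca (fun _ => d) = id)
    (hdc : nuca (fun _ : G => d) ∘ nuca (fun _ => c) = id) : StablyInvertible s := by
  refine ⟨N, t, fun p hp => ?_⟩
  rcases eq_shift_or_eq_const_of_mem_orbitClosure hs hp with ⟨g, rfl⟩ | rfl
  · exact ⟨_, shift_mem_orbitClosure t g, nuca_shift_comp_shift hst g, nuca_shift_comp_shift hts g⟩
  · exact ⟨_, const_mem_orbitClosure ht, hcd, hdc⟩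

lemma stablyInvertible_of_finite [Finite G] [Finite A] [Nonempty A] {s : G → ((M → A) → A)}
    (hps : PostSurjective (nuca s)) : StablyInvertible s := by
  classical
  have := Fintype.ofFinite G
  have hsurj : Function.Surjective (nuca s) := fun y =>
    (hps y y ⟨Finset.univ, fun g hg => absurd (Finset.mem_univ g) hg⟩).imp fun _ h => h.2
  have hbij : Function.Bijective (nuca s) := ⟨Finite.injective_iff_surjective.2 hsurj, hsurj⟩
  set χ := Function.surjInv hsurj
  have hχ : nuca (localRule χ Finset.univ) = χ := funext fun y => funext fun g =>
    localRule_apply_eq (fun z z' hzz' => congrArg (χ · g) (funext fun h => by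
      simpa using hzz' (g⁻¹ * h) (Finset.mem_univ _))) y
  have hst : nuca s ∘ nuca (localRule χ Finset.univ) = id := by
    rw [hχ]; exact funext (Function.rightInverse_surjInv hsurj)
  have hts : nuca (localRule χ Finset.univ) ∘ nuca s = id := by
    rw [hχ]; exact funext (Function.leftInverse_surjInv hbij)
  refine ⟨Finset.univ, localRule χ Finset.univ, fun p hp => ?_⟩
  obtain ⟨g, rfl⟩ := exists_eq_shift_of_mem_orbitClosure hp
  exact ⟨_, shift_mem_orbitClosure _ g, nuca_shift_comp_shift hst g, nuca_shift_comp_shift hts g⟩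

end NUCA

theorem theoremC_general {G : Type*} [Group G] (hG : PostInjunctive G)
    {A : Type*} [Fintype A] {M : Finset G} (s : G → ((M → A) → A))
    (hconst : AsymptoticallyConstant s) (hpost : StablyPostSurjective s) :
    StablyInvertible s := by
  let _ : TopologicalSpace A := ⊥
  have _ : DiscreteTopology A := ⟨rfl⟩
  rcases isEmpty_or_nonempty A with _ | _
  · exact ⟨M, s, fun p hp => ⟨p, hp, Subsingleton.elim _ _, Subsingleton.elim _ _⟩⟩
  have hps : PostSurjective (nuca s) := hpost s (by simpa using shift_mem_orbitClosure s 1)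
  rcases finite_or_infinite G with _ | _
  · exact stablyInvertible_of_finite hps
  obtain ⟨c, hc⟩ := hconst
  have hpc := hpost _ (const_mem_orbitClosure hc)
  have hc_bij : Function.Bijective (nuca fun _ : G => c) :=
    ⟨injective_of_preInjective_of_postSurjective (preInjective_of_postInjunctive hG hpc) hpc,
      hpc.surjective (continuous_nuca _)⟩
  obtain ⟨N₀, d, hdc, hcd⟩ := exists_nuca_const_inverse hc_bij
  obtain ⟨χ, hχs, hsχ, Ω, hχd⟩ := exists_inverse_eq_of_asymptotic hc hps hdc hcd
  have hχ := continuous_of_leftInverse_of_rightInverse (continuous_nuca s) (congrFun hχs)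
    (congrFun hsχ)
  obtain ⟨N, t, d', ht, htχ, hd'⟩ := exists_asymptotic_nuca_eq hχ hχd
  exact stablyInvertible_of_asymptotic hc ht (htχ ▸ hsχ) (htχ ▸ hχs) (hd' ▸ hcd) (hd' ▸ hdc)

/-- Theorem C: over a countable post-injunctive group universe and
a finite alphabet, every stably post-surjective NUCA with finite memory and
asymptotically constant configuration of local defining maps is stably
invertible. -/
theorem theoremC {G : Type*} [Group G] [Countable G] (hG : PostInjunctive G)
    {A : Type*} [Fintype A] {M : Finset G} (s : G → ((M → A) → A))
    (hconst : AsymptoticallyConstant s) (hpost : StablyPostSurjective s) :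
    StablyInvertible s :=
  theoremC_general hG s hconst hpost
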